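/- Let d be a positive integer, σ > 0, and let h : ℝ^d → ℝ be measurable with |h(x)| ≤ 1 for all x. Then the Gaussian smoothing h̃ satisfies |h̃(x) − h̃(y)| ≤ (e√2 / σ) · ‖x − y‖_2 for all x, y ∈ ℝ^d. -/

import Mathlib

/-! Write `δ = x - y`. After the substitution `t ↦ t - δ`, `h̃ x - h̃ y` is the integral of
`h (y + t)` against `φ_σ(t - δ) - φ_σ(t)`, so it is at most the `L¹` distance between two
shifted Gaussians. That distance is at most `2`, and by AM-GM (a Cauchy–Schwarz in disguise) it
is at most the square root of the `χ²`-divergence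
`∫ φ_σ(t - δ)² / φ_σ(t) - 1 = exp (‖δ‖² / σ²) - 1`, which is computed from the identity
`φ_σ(t - δ)² = exp (‖δ‖² / σ²) φ_σ(t - 2δ) φ_σ(t)`. With `r = ‖δ‖ / σ`, the bound
`exp (r²) - 1 ≤ 2 r²` for `r ≤ 1` and the bound `2` for `r ≥ 1` give the Lipschitz constant. -/

open MeasureTheory

/-- Density of the centered Gaussian on `ℝ^d` with covariance `σ² I_d`. -/
noncomputable def gaussDensity (d : ℕ) (σ : ℝ) (t : EuclideanSpace ℝ (Fin d)) : ℝ :=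
  (2 * Real.pi * σ ^ 2) ^ (-(d : ℝ) / 2) * Real.exp (-‖t‖ ^ 2 / (2 * σ ^ 2))

/-- Gaussian smoothing `h̃(x) = ∫ h(x+t) φ_σ(t) dt`. -/
noncomputable def gaussSmooth (d : ℕ) (σ : ℝ)
    (h : EuclideanSpace ℝ (Fin d) → ℝ) (x : EuclideanSpace ℝ (Fin d)) : ℝ :=
  ∫ t : EuclideanSpace ℝ (Fin d), h (x + t) * gaussDensity d σ t

open Real

theorem two_mul_abs_sub_le_div_add_mul {a b c : ℝ} (hb : 0 < b) (hc : 0 < c) :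
    2 * |a - b| ≤ (a ^ 2 / b - 2 * a + b) / c + c * b := by
  have hW : a ^ 2 / b - 2 * a + b = (a - b) ^ 2 / b := by field_simp; ring
  rw [hW, div_div, div_add' _ _ _ (by positivity), le_div_iff₀ (by positivity)]
  nlinarith [sq_nonneg (|a - b| - c * b), sq_abs (a - b), abs_nonneg (a - b)]

section L1Distance

variable {α : Type*} [MeasurableSpace α] {μ : Measure α} {f g : α → ℝ}

theorem abs_integral_mul_sub_integral_mul_le {h : α → ℝ} (hh : AEStronglyMeasurable h μ)
    (hbd : ∀ x, |h x| ≤ 1) (hf : Integrable f μ) (hg : Integrable g μ) :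
    |∫ x, h x * f x ∂μ - ∫ x, h x * g x ∂μ| ≤ ∫ x, |f x - g x| ∂μ := by
  have hbd' : ∀ᵐ x ∂μ, ‖h x‖ ≤ 1 := ae_of_all _ hbd
  rw [← integral_sub (hf.bdd_mul hh hbd') (hg.bdd_mul hh hbd')]
  simp_rw [← mul_sub]
  calc |∫ x, h x * (f x - g x) ∂μ| ≤ ∫ x, |h x * (f x - g x)| ∂μ :=
        abs_integral_le_integral_abs
    _ ≤ ∫ x, |f x - g x| ∂μ := by
        refine integral_mono ((hf.sub hg).bdd_mul hh hbd').abs (hf.sub hg).abs fun x => ?_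
        rw [abs_mul]
        exact mul_le_of_le_one_left (abs_nonneg _) (hbd x)

theorem integral_abs_sub_le_two (hf₀ : ∀ x, 0 ≤ f x) (hg₀ : ∀ x, 0 ≤ g x)
    (hf : Integrable f μ) (hg : Integrable g μ) (hf₁ : ∫ x, f x ∂μ = 1)
    (hg₁ : ∫ x, g x ∂μ = 1) : ∫ x, |f x - g x| ∂μ ≤ 2 :=
  calc ∫ x, |f x - g x| ∂μ ≤ ∫ x, f x + g x ∂μ :=
        integral_mono (hf.sub hg).abs (hf.add hg) fun x =>
          abs_sub_le_iff.2 ⟨by linarith [hg₀ x], by linarith [hf₀ x]⟩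
    _ = 2 := by rw [integral_add hf hg, hf₁, hg₁]; norm_num

theorem integral_abs_sub_le_sqrt_integral_sq_div_sub_one (hg_pos : ∀ x, 0 < g x)
    (hf : Integrable f μ) (hg : Integrable g μ) (hfg : Integrable (fun x => f x ^ 2 / g x) μ)
    (hf₁ : ∫ x, f x ∂μ = 1) (hg₁ : ∫ x, g x ∂μ = 1) :
    ∫ x, |f x - g x| ∂μ ≤ √(∫ x, f x ^ 2 / g x ∂μ - 1) := by
  set χ := ∫ x, f x ^ 2 / g x ∂μ - 1
  -- integrate the pointwise AM-GM bound, then optimise the free parameter at `c = √χ`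
  have key : ∀ c > 0, 2 * ∫ x, |f x - g x| ∂μ ≤ χ / c + c := by
    intro c hc
    have hW₀ : Integrable (fun x => f x ^ 2 / g x - 2 * f x) μ := hfg.sub (hf.const_mul 2)
    have hW : Integrable (fun x => f x ^ 2 / g x - 2 * f x + g x) μ := hW₀.add hg
    calc 2 * ∫ x, |f x - g x| ∂μ = ∫ x, 2 * |f x - g x| ∂μ := (integral_const_mul _ _).symm
      _ ≤ ∫ x, (f x ^ 2 / g x - 2 * f x + g x) / c + c * g x ∂μ :=
          integral_mono ((hf.sub hg).abs.const_mul 2) ((hW.div_const c).add (hg.const_mul c))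
            fun x => two_mul_abs_sub_le_div_add_mul (hg_pos x) hc
      _ = χ / c + c := by
          rw [integral_add (hW.div_const c) (hg.const_mul c), integral_div,
            integral_add hW₀ hg, integral_sub hfg (hf.const_mul 2),
            integral_const_mul, integral_const_mul, hf₁, hg₁]
          ring
  rcases le_or_gt χ 0 with hχ | hχ
  · rw [sqrt_eq_zero'.2 hχ]
    refine le_of_forall_pos_lt_add fun ε hε => ?_
    have := key ε hε
    have : χ / ε ≤ 0 := div_nonpos_of_nonpos_of_nonneg hχ hε.le
    linarith
  · have := key √χ (sqrt_pos.2 hχ)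
    rw [div_sqrt] at this
    linarith

end L1Distance

section Gaussian

variable {d : ℕ} {σ : ℝ}

theorem gaussDensity_pos (hσ : σ ≠ 0) (t : EuclideanSpace ℝ (Fin d)) :
    0 < gaussDensity d σ t := by
  unfold gaussDensity
  have : 0 < 2 * π * σ ^ 2 := by positivity
  positivity

theorem integral_gaussDensity (hσ : σ ≠ 0) :
    ∫ t : EuclideanSpace ℝ (Fin d), gaussDensity d σ t = 1 := by
  have hb : 0 < (2 * σ ^ 2)⁻¹ := by positivity
  have hφ : gaussDensity d σ = fun t =>
      (2 * π * σ ^ 2) ^ (-(d : ℝ) / 2) * exp (-(2 * σ ^ 2)⁻¹ * ‖t‖ ^ 2) := by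
    ext t; rw [gaussDensity]; congr 2; ring
  rw [hφ, integral_const_mul, GaussianFourier.integral_rexp_neg_mul_sq_norm hb,
    finrank_euclideanSpace_fin, div_inv_eq_mul, show π * (2 * σ ^ 2) = 2 * π * σ ^ 2 by ring,
    ← rpow_add (by positivity)]
  ring_nf
  exact rpow_zero _

theorem integrable_gaussDensity (hσ : σ ≠ 0) :
    Integrable (gaussDensity d σ) :=
  Integrable.of_integral_ne_zero (by rw [integral_gaussDensity hσ]; exact one_ne_zero)

theorem gaussDensity_sub_sq (δ t : EuclideanSpace ℝ (Fin d)) :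
    gaussDensity d σ (t - δ) ^ 2 =
      exp (‖δ‖ ^ 2 / σ ^ 2) * gaussDensity d σ (t - (2 : ℝ) • δ) * gaussDensity d σ t := by
  have h₁ : ‖t - δ‖ ^ 2 = ‖t‖ ^ 2 - 2 * inner ℝ t δ + ‖δ‖ ^ 2 := norm_sub_sq_real t δ
  have h₂ : ‖t - (2 : ℝ) • δ‖ ^ 2 = ‖t‖ ^ 2 - 4 * inner ℝ t δ + 4 * ‖δ‖ ^ 2 := by
    rw [norm_sub_sq_real, real_inner_smul_right, norm_smul]; norm_num; ring
  have hexp : exp (-‖t - δ‖ ^ 2 / (2 * σ ^ 2)) ^ 2 = exp (‖δ‖ ^ 2 / σ ^ 2) *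
      exp (-‖t - (2 : ℝ) • δ‖ ^ 2 / (2 * σ ^ 2)) * exp (-‖t‖ ^ 2 / (2 * σ ^ 2)) := by
    rw [sq, ← exp_add, ← exp_add, ← exp_add, h₁, h₂]
    ring_nf
  simp only [gaussDensity]
  linear_combination ((2 * π * σ ^ 2) ^ (-(d : ℝ) / 2)) ^ 2 * hexp

theorem integral_abs_gaussDensity_sub_le (hσ : σ ≠ 0) (δ : EuclideanSpace ℝ (Fin d)) :
    ∫ t, |gaussDensity d σ (t - δ) - gaussDensity d σ t| ≤ √(exp (‖δ‖ ^ 2 / σ ^ 2) - 1) := by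
  have hφ := integrable_gaussDensity (d := d) hσ
  have hχ : (fun t => gaussDensity d σ (t - δ) ^ 2 / gaussDensity d σ t) =
      fun t => exp (‖δ‖ ^ 2 / σ ^ 2) * gaussDensity d σ (t - (2 : ℝ) • δ) := by
    ext t
    rw [gaussDensity_sub_sq, mul_div_cancel_right₀ _ (gaussDensity_pos hσ t).ne']
  have := integral_abs_sub_le_sqrt_integral_sq_div_sub_one (gaussDensity_pos hσ)
    (hφ.comp_sub_right δ) hφ (by rw [hχ]; exact (hφ.comp_sub_right _).const_mul _)
    (by rw [integral_sub_right_eq_self, integral_gaussDensity hσ]) (integral_gaussDensity hσ)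
  rwa [hχ, integral_const_mul, integral_sub_right_eq_self, integral_gaussDensity hσ,
    mul_one] at this

end Gaussian

theorem gaussSmooth_eq_integral_sub {d : ℕ} {σ : ℝ} (h : EuclideanSpace ℝ (Fin d) → ℝ)
    (x y : EuclideanSpace ℝ (Fin d)) :
    gaussSmooth d σ h x = ∫ t, h (y + t) * gaussDensity d σ (t - (x - y)) := by
  rw [gaussSmooth, ← integral_sub_right_eq_self _ (x - y)]
  congr with t
  congr 2
  abel

theorem min_two_sqrt_exp_sq_sub_one_le {r : ℝ} (hr : 0 ≤ r) :
    min 2 √(exp (r ^ 2) - 1) ≤ exp 1 * √2 * r := by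
  have he : 2 ≤ exp 1 := by linarith [add_one_le_exp 1]
  have hs : 1 ≤ √2 := one_le_sqrt.2 one_le_two
  rcases le_or_gt r 1 with hr₁ | hr₁
  · have hexp : exp (r ^ 2) - 1 ≤ 2 * r ^ 2 := by
      have := abs_exp_sub_one_le (x := r ^ 2) (by rw [abs_of_nonneg (by positivity)]; nlinarith)
      rw [abs_of_nonneg (by positivity : 0 ≤ r ^ 2)] at this
      exact (le_abs_self _).trans this
    calc min 2 √(exp (r ^ 2) - 1) ≤ √(2 * r ^ 2) := (min_le_right _ _).trans (sqrt_le_sqrt hexp)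
      _ = 1 * √2 * r := by rw [sqrt_mul zero_le_two, sqrt_sq hr, one_mul]
      _ ≤ exp 1 * √2 * r := by gcongr; linarith
  · calc min 2 √(exp (r ^ 2) - 1) ≤ 2 * 1 * 1 := by simp
      _ ≤ exp 1 * √2 * r := by gcongr

theorem gaussSmooth_lipschitz_general
    (d : ℕ) (σ : ℝ) (hσ : 0 < σ)
    (h : EuclideanSpace ℝ (Fin d) → ℝ)
    (hmeas : Measurable h) (hbd : ∀ x, |h x| ≤ 1) :
    ∀ x y : EuclideanSpace ℝ (Fin d),
      |gaussSmooth d σ h x - gaussSmooth d σ h y| ≤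
        (Real.exp 1 * Real.sqrt 2 / σ) * ‖x - y‖ := by
  intro x y
  have hφ := integrable_gaussDensity (d := d) hσ.ne'
  have hφ₁ := integral_gaussDensity (d := d) hσ.ne'
  have hL1 : |gaussSmooth d σ h x - gaussSmooth d σ h y| ≤
      ∫ t, |gaussDensity d σ (t - (x - y)) - gaussDensity d σ t| := by
    rw [gaussSmooth_eq_integral_sub h x y]
    exact abs_integral_mul_sub_integral_mul_le
      (hmeas.comp (measurable_const_add y)).aestronglyMeasurable (fun t => hbd _)
      (hφ.comp_sub_right _) hφ
  have hTV := integral_abs_sub_le_two (fun t => (gaussDensity_pos hσ.ne' (t - (x - y))).le)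
    (fun t => (gaussDensity_pos hσ.ne' t).le) (hφ.comp_sub_right (x - y)) hφ
    (by rw [integral_sub_right_eq_self, hφ₁]) hφ₁
  have hχ := integral_abs_gaussDensity_sub_le hσ.ne' (x - y)
  rw [← div_pow] at hχ
  calc |gaussSmooth d σ h x - gaussSmooth d σ h y|
      ≤ min 2 √(exp ((‖x - y‖ / σ) ^ 2) - 1) := hL1.trans (le_min hTV hχ)
    _ ≤ exp 1 * √2 * (‖x - y‖ / σ) := min_two_sqrt_exp_sq_sub_one_le (by positivity)
    _ = exp 1 * √2 / σ * ‖x - y‖ := by ring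

/-- If `h : ℝ^d → ℝ` is measurable with `|h| ≤ 1`, then its Gaussian
smoothing `h̃` satisfies `|h̃(x) − h̃(y)| ≤ (e√2/σ) ‖x − y‖₂`. -/
theorem gaussSmooth_lipschitz
    (d : ℕ) (hd : 0 < d) (σ : ℝ) (hσ : 0 < σ)
    (h : EuclideanSpace ℝ (Fin d) → ℝ)
    (hmeas : Measurable h) (hbd : ∀ x, |h x| ≤ 1) :
    ∀ x y : EuclideanSpace ℝ (Fin d),
      |gaussSmooth d σ h x - gaussSmooth d σ h y| ≤
        (Real.exp 1 * Real.sqrt 2 / σ) * ‖x - y‖ :=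
  gaussSmooth_lipschitz_general d σ hσ h hmeas hbd
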